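/- Let L be a Lie algebra of characteristic zero, S a nilpotent subalgebra of class c, and H a subalgebra consisting of ad-nilpotent elements of L with H contained in ∩_{i≤c} N_L(C_L^i(S)). Then the subalgebra N generated by all images S^h for h in the group generated by exponentials of elements of H is nilpotent, of class at most c. -/

import Mathlib

section Defs

variable {L : Type*} [LieRing L]

/-- The set-theoretic normalizer of a subset of a Lie ring. -/
def setNormalizer (S : Set L) : Set L := {x | ∀ s ∈ S, ⁅x, s⁆ ∈ S}

/-- Iterated centralizers `C_L^n(A)`: `C^0 = 0` and
`C^{n+1} = {x ∈ ⋂_{1 ≤ i ≤ n} N_L(C^i) : [x, A] ⊆ C^n}`. -/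
def iterCent (A : Set L) : ℕ → Set L
  | 0 => {0}
  | n + 1 =>
      {x | (∀ i, 1 ≤ i → i ≤ n → x ∈ setNormalizer (iterCent A i)) ∧
        ∀ a ∈ A, ⁅x, a⁆ ∈ iterCent A n}

/-- `[X,Y]`: the additive subgroup generated by brackets. -/
def bracketSpan (X Y : Set L) : AddSubgroup L :=
  AddSubgroup.closure {z | ∃ x ∈ X, ∃ y ∈ Y, z = ⁅x, y⁆}

/-- Lower central series of a subset: `X^0 = ⟨X⟩`, `X^{n+1} = [X, X^n]`. -/
def lcsSet (X : Set L) : ℕ → AddSubgroup L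
  | 0 => AddSubgroup.closure X
  | n + 1 => bracketSpan X (lcsSet X n)

end Defs

/-- The exponential of `ad h`, truncated at `n`. -/
noncomputable def expAd (K : Type*) {L : Type*} [Field K] [LieRing L]
    [LieAlgebra K L] (h : L) (n : ℕ) : L → L :=
  fun x => ∑ i ∈ Finset.range n,
    ((Nat.factorial i : K)⁻¹) • ((LieAlgebra.ad K L h) ^ i) x

section Aux

variable {L : Type*} [LieRing L]

lemma mem_iterCent_succ {A : Set L} {x : L} {n : ℕ} :
    x ∈ iterCent A (n+1) ↔
      (∀ i, 1 ≤ i → i ≤ n → ∀ s ∈ iterCent A i, ⁅x, s⁆ ∈ iterCent A i) ∧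
      ∀ a ∈ A, ⁅x, a⁆ ∈ iterCent A n := by
  rw [iterCent]; rfl

lemma mem_iterCent_zero {A : Set L} {x : L} : x ∈ iterCent A 0 ↔ x = 0 := by
  rw [iterCent]; rfl

lemma iterCent_closed (K : Type*) [Field K] [LieAlgebra K L] (A : Set L) (n : ℕ) :
    (0 : L) ∈ iterCent A n ∧
    (∀ x y : L, x ∈ iterCent A n → y ∈ iterCent A n → x + y ∈ iterCent A n) ∧
    (∀ (k : K) (x : L), x ∈ iterCent A n → k • x ∈ iterCent A n) := by
  induction n using Nat.strong_induction_on with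
  | _ n ih =>
    match n with
    | 0 =>
      refine ⟨mem_iterCent_zero.2 rfl, ?_, ?_⟩
      · intro x y hx hy
        rw [mem_iterCent_zero] at *
        simp [hx, hy]
      · intro k x hx
        rw [mem_iterCent_zero] at *
        simp [hx]
    | n + 1 =>
      refine ⟨?_, ?_, ?_⟩
      · rw [mem_iterCent_succ]
        constructor
        · intro i h1 h2 s hs
          rw [zero_lie]
          exact (ih i (Nat.lt_succ_of_le h2)).1
        · intro a _
          rw [zero_lie]
          exact (ih n (Nat.lt_succ_self n)).1
      · intro x y hx hy
        rw [mem_iterCent_succ] at hx hy ⊢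
        constructor
        · intro i h1 h2 s hs
          rw [add_lie]
          exact (ih i (Nat.lt_succ_of_le h2)).2.1 _ _ (hx.1 i h1 h2 s hs) (hy.1 i h1 h2 s hs)
        · intro a ha
          rw [add_lie]
          exact (ih n (Nat.lt_succ_self n)).2.1 _ _ (hx.2 a ha) (hy.2 a ha)
      · intro k x hx
        rw [mem_iterCent_succ] at hx ⊢
        constructor
        · intro i h1 h2 s hs
          rw [smul_lie]
          exact (ih i (Nat.lt_succ_of_le h2)).2.2 k _ (hx.1 i h1 h2 s hs)
        · intro a ha
          rw [smul_lie]
          exact (ih n (Nat.lt_succ_self n)).2.2 k _ (hx.2 a ha)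

lemma iterCent_submodule (K : Type*) [Field K] [LieAlgebra K L] (A : Set L) (n : ℕ) :
    ∃ p : Submodule K L, (p : Set L) = iterCent A n := by
  obtain ⟨h0, hadd, hsmul⟩ := iterCent_closed K A n
  exact ⟨{ carrier := iterCent A n, zero_mem' := h0,
           add_mem' := fun ha hb => hadd _ _ ha hb,
           smul_mem' := fun k x hx => hsmul k x hx }, rfl⟩

lemma iterCent_zero_mem (K : Type*) [Field K] [LieAlgebra K L] (A : Set L) (n : ℕ) :
    (0 : L) ∈ iterCent A n :=
  (iterCent_closed K A n).1

lemma iterCent_add_mem (K : Type*) [Field K] [LieAlgebra K L] {A : Set L} {n : ℕ} {x y : L}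
    (hx : x ∈ iterCent A n) (hy : y ∈ iterCent A n) : x + y ∈ iterCent A n :=
  (iterCent_closed K A n).2.1 x y hx hy

lemma iterCent_neg_mem (K : Type*) [Field K] [LieAlgebra K L] {A : Set L} {n : ℕ} {x : L}
    (hx : x ∈ iterCent A n) : -x ∈ iterCent A n := by
  have := (iterCent_closed K A n).2.2 (-1 : K) x hx
  simpa using this

lemma iterCent_sub_mem (K : Type*) [Field K] [LieAlgebra K L] {A : Set L} {n : ℕ} {x y : L}
    (hx : x ∈ iterCent A n) (hy : y ∈ iterCent A n) : x - y ∈ iterCent A n := by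
  rw [sub_eq_add_neg]
  exact iterCent_add_mem K hx (iterCent_neg_mem K hy)

/-- Elements of `C^{n+1}` normalize `C^j` for all `j ≤ n` (including `j = 0`). -/
lemma iterCent_succ_norm {A : Set L} {n j : ℕ} {x z : L} (hx : x ∈ iterCent A (n+1))
    (hj : j ≤ n) (hz : z ∈ iterCent A j) : ⁅x, z⁆ ∈ iterCent A j := by
  rcases j with _ | j
  · rw [mem_iterCent_zero] at hz ⊢
    rw [hz, lie_zero]
  · exact (mem_iterCent_succ.1 hx).1 (j+1) (Nat.succ_le_succ (Nat.zero_le _)) hj z hz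

end Aux

section Aux2
variable {L : Type*} [LieRing L]

/-- If `A` is closed under brackets, then `A` normalizes every iterated centralizer. -/
lemma lie_mem_iterCent_of_mem (K : Type*) [Field K] [LieAlgebra K L] {A : Set L}
    (hA : ∀ a ∈ A, ∀ b ∈ A, ⁅a, b⁆ ∈ A) :
    ∀ n, ∀ s ∈ A, ∀ x ∈ iterCent A n, ⁅s, x⁆ ∈ iterCent A n := by
  intro n
  induction n using Nat.strong_induction_on with
  | _ n ih =>
    intro s hs x hx
    match n with
    | 0 =>
      rw [mem_iterCent_zero] at hx ⊢
      rw [hx, lie_zero]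
    | n + 1 =>
      rw [mem_iterCent_succ] at hx ⊢
      refine ⟨fun i h1 h2 z hz => ?_, fun a ha => ?_⟩
      · rw [lie_lie]
        refine iterCent_sub_mem K ?_ ?_
        · exact ih i (Nat.lt_succ_of_le h2) s hs _ (hx.1 i h1 h2 z hz)
        · exact hx.1 i h1 h2 _ (ih i (Nat.lt_succ_of_le h2) s hs z hz)
      · rw [lie_lie]
        refine iterCent_sub_mem K ?_ ?_
        · exact ih n (Nat.lt_succ_self n) s hs _ (hx.2 a ha)
        · exact hx.2 _ (hA s hs a ha)

/-- Each iterated centralizer is closed under brackets. -/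
lemma iterCent_lie_mem (K : Type*) [Field K] [LieAlgebra K L] {A : Set L} {n : ℕ} {x y : L}
    (hx : x ∈ iterCent A n) (hy : y ∈ iterCent A n) : ⁅x, y⁆ ∈ iterCent A n := by
  match n with
  | 0 =>
    rw [mem_iterCent_zero] at hx ⊢
    rw [hx, zero_lie]
  | n + 1 =>
    rw [mem_iterCent_succ]
    have hx' := mem_iterCent_succ.1 hx
    have hy' := mem_iterCent_succ.1 hy
    refine ⟨fun i h1 h2 z hz => ?_, fun a ha => ?_⟩
    · rw [lie_lie]
      exact iterCent_sub_mem K (iterCent_succ_norm hx h2 (hy'.1 i h1 h2 z hz))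
        (iterCent_succ_norm hy h2 (hx'.1 i h1 h2 z hz))
    · rw [lie_lie]
      exact iterCent_sub_mem K (iterCent_succ_norm hx (le_refl n) (hy'.2 a ha))
        (iterCent_succ_norm hy (le_refl n) (hx'.2 a ha))
end Aux2

section Aux3
variable {L : Type*} [LieRing L]

lemma lcsSet_le {X : Set L} (T : AddSubgroup L) (hX : X ⊆ T)
    (hbr : ∀ x ∈ X, ∀ y ∈ (T : Set L), ⁅x, y⁆ ∈ T) :
    ∀ k, (lcsSet X k : Set L) ⊆ T := by
  intro k
  induction k with
  | zero =>
    rw [lcsSet]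
    exact AddSubgroup.closure_le T |>.2 hX
  | succ k ih =>
    rw [lcsSet, bracketSpan]
    refine AddSubgroup.closure_le T |>.2 ?_
    rintro z ⟨x, hx, y, hy, rfl⟩
    exact hbr x hx y (ih hy)

lemma lie_mem_lcsSet_succ {X : Set L} {k : ℕ} {a x : L} (ha : a ∈ X)
    (hx : x ∈ lcsSet X k) : ⁅a, x⁆ ∈ lcsSet X (k+1) := by
  rw [lcsSet, bracketSpan]
  exact AddSubgroup.subset_closure ⟨a, ha, x, hx, rfl⟩

/-- If `A` is a bracket-closed set whose lower central series vanishes at `c`,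
then `lcsSet A k ⊆ C^n(A)` whenever `k + n = c`. -/
lemma lcsSet_subset_iterCent (K : Type*) [Field K] [LieAlgebra K L] {A : Set L}
    (hA : ∀ a ∈ A, ∀ b ∈ A, ⁅a, b⁆ ∈ A) {c : ℕ} (hS : lcsSet A c = ⊥) :
    ∀ n k, k + n = c → (lcsSet A k : Set L) ⊆ iterCent A n := by
  intro n
  induction n with
  | zero =>
    intro k hk x hx
    rw [Nat.add_zero] at hk
    subst hk
    rw [hS] at hx
    rw [mem_iterCent_zero]
    simpa using hx
  | succ n ih =>
    intro k hk x hx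
    rw [mem_iterCent_succ]
    constructor
    · intro i h1 h2 z hz
      -- x lies in the normalizer of C^i since A does and that normalizer is a
      -- bracket-closed additive subgroup
      obtain ⟨p, hp⟩ := iterCent_submodule K A i
      set T : AddSubgroup L :=
        { carrier := {w : L | ∀ z ∈ iterCent A i, ⁅w, z⁆ ∈ iterCent A i}
          zero_mem' := fun z hz => by rw [zero_lie]; exact iterCent_zero_mem K A i
          add_mem' := fun hu hv z hz => by
            rw [add_lie]; exact iterCent_add_mem K (hu z hz) (hv z hz)
          neg_mem' := fun hu z hz => by
            rw [neg_lie]; exact iterCent_neg_mem K (hu z hz) } with hT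
      have hXT : A ⊆ T := fun a ha z hz => lie_mem_iterCent_of_mem K hA i a ha z hz
      have hbr : ∀ u ∈ A, ∀ v ∈ (T : Set L), ⁅u, v⁆ ∈ T := by
        intro u hu v hv z hz
        rw [lie_lie]
        exact iterCent_sub_mem K
          (lie_mem_iterCent_of_mem K hA i u hu _ (hv z hz))
          (hv _ (lie_mem_iterCent_of_mem K hA i u hu z hz))
      exact lcsSet_le T hXT hbr k hx z hz
    · intro a ha
      have h1 : ⁅a, x⁆ ∈ lcsSet A (k+1) := lie_mem_lcsSet_succ ha hx
      have h2 : ⁅a, x⁆ ∈ iterCent A n := ih (k+1) (by omega) h1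
      have := iterCent_neg_mem K h2
      rwa [lie_skew] at this

end Aux3

noncomputable def expAd' (K : Type*) {L : Type*} [Field K] [LieRing L]
    [LieAlgebra K L] (h : L) (n : ℕ) : L → L :=
  fun x => ∑ i ∈ Finset.range n,
    ((Nat.factorial i : K)⁻¹) • ((LieAlgebra.ad K L h) ^ i) x

section Aux4
variable {K L : Type*} [Field K] [CharZero K] [LieRing L] [LieAlgebra K L]

lemma end_pow_mem (T : Module.End K L) (p : Submodule K L) (hT : ∀ z ∈ p, T z ∈ p)
    (k : ℕ) {x : L} (hx : x ∈ p) : (T ^ k) x ∈ p := by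
  induction k with
  | zero => simpa using hx
  | succ k ih =>
    rw [pow_succ', Module.End.mul_apply]
    exact hT _ ih

lemma ad_pow_mem (h : L) (p : Submodule K L) (hp : ∀ z ∈ p, ⁅h, z⁆ ∈ p)
    (k : ℕ) {x : L} (hx : x ∈ p) : ((LieAlgebra.ad K L h) ^ k) x ∈ p :=
  end_pow_mem _ p (fun z hz => by rw [LieAlgebra.ad_apply]; exact hp z hz) k hx

lemma expAd_mem' (h : L) (n : ℕ) (p : Submodule K L) (hp : ∀ z ∈ p, ⁅h, z⁆ ∈ p)
    {x : L} (hx : x ∈ p) : expAd' K h n x ∈ p :=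
  Submodule.sum_mem _ fun i _ => p.smul_mem _ (ad_pow_mem h p hp i hx)

/-- The exponential endomorphism. -/
noncomputable def expEnd (K : Type*) {L : Type*} [Field K] [LieRing L] [LieAlgebra K L]
    (h : L) (n : ℕ) : Module.End K L :=
  ∑ i ∈ Finset.range n, ((Nat.factorial i : K)⁻¹) • (LieAlgebra.ad K L h) ^ i

lemma expEnd_apply (h : L) (n : ℕ) (x : L) : expEnd K h n x = expAd' K h n x := by
  simp [expEnd, expAd', LinearMap.sum_apply, LinearMap.smul_apply]

lemma expEnd_sub_one_pow (h : L) (n : ℕ) (hn : (LieAlgebra.ad K L h) ^ n = 0) :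
    (expEnd K h n - 1) ^ n = 0 := by
  match n with
  | 0 =>
    rw [pow_zero]
    have h1 : (1 : Module.End K L) = 0 := by rw [← pow_zero (LieAlgebra.ad K L h), hn]
    rw [h1]
  | m + 1 =>
    set A := LieAlgebra.ad K L h with hA
    set P : Module.End K L :=
      ∑ i ∈ Finset.range m, ((Nat.factorial (i+1) : K)⁻¹) • A ^ i with hP
    have hcomm : Commute A P := by
      refine Commute.sum_right _ _ _ fun i _ => ?_
      have hc : A * A ^ i = A ^ i * A := (Commute.pow_self A i).symm.eq
      show A * (((Nat.factorial (i+1) : K)⁻¹) • A ^ i) = (((Nat.factorial (i+1) : K)⁻¹) • A ^ i) * A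
      rw [mul_smul_comm, hc, smul_mul_assoc]
    have hE : expEnd K h (m+1) = 1 + A * P := by
      rw [expEnd, Finset.sum_range_succ']
      have h0 : ((Nat.factorial 0 : K)⁻¹) • A ^ 0 = 1 := by simp
      rw [h0, hP, Finset.mul_sum]
      rw [add_comm]
      congr 1
      refine Finset.sum_congr rfl fun i _ => ?_
      rw [mul_smul_comm, ← pow_succ']
    rw [hE, add_sub_cancel_left, hcomm.mul_pow, hn, zero_mul]

/-- The truncated exponential is invertible, with inverse a polynomial in `ad h`;
consequently `f.symm` preserves any `⁅h, ·⁆`-stable submodule. -/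
lemma symm_expAd_mem (h : L) (n : ℕ) (hn : (LieAlgebra.ad K L h) ^ n = 0)
    (f : L ≃ₗ[K] L) (hf : ∀ x, f x = expAd' K h n x)
    (p : Submodule K L) (hp : ∀ z ∈ p, ⁅h, z⁆ ∈ p) {x : L} (hx : x ∈ p) :
    f.symm x ∈ p := by
  set E := expEnd K h n with hE
  have hfE : ∀ y, f y = E y := fun y => by rw [hf, expEnd_apply]
  set G : Module.End K L := ∑ k ∈ Finset.range n, (1 - E) ^ k with hG
  have hpow : (1 - E) ^ n = 0 := by
    have : (1 : Module.End K L) - E = -(E - 1) := by abel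
    rw [this, neg_pow, expEnd_sub_one_pow h n hn, mul_zero]
  have h2 : (1 - E - 1 : Module.End K L) = -E := by abel
  have hGE : G * E = 1 := by
    have := geom_sum_mul (1 - E) n
    rw [hpow, ← hG, h2, mul_neg, zero_sub] at this
    exact neg_inj.mp this
  have hEG : E * G = 1 := by
    have := mul_geom_sum (1 - E) n
    rw [hpow, ← hG, h2, neg_mul, zero_sub] at this
    exact neg_inj.mp this
  have hsymm : ∀ y, f.symm y = G y := by
    intro y
    apply f.injective
    rw [f.apply_symm_apply, hfE, ← Module.End.mul_apply, hEG, Module.End.one_apply]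
  rw [hsymm]
  have hsub : ∀ z ∈ p, (1 - E) z ∈ p := by
    intro z hz
    rw [LinearMap.sub_apply, Module.End.one_apply]
    refine p.sub_mem hz ?_
    rw [expEnd_apply]
    exact expAd_mem' h n p hp hz
  rw [hG, LinearMap.sum_apply]
  exact Submodule.sum_mem _ fun k _ => end_pow_mem _ p hsub k hx

end Aux4

section Aux5
variable {K L : Type*} [Field K] [CharZero K] [LieRing L] [LieAlgebra K L]

omit [Field K] [CharZero K] [LieAlgebra K L] in
lemma sum_lie' {ι : Type*} (s : Finset ι) (f : ι → L) (z : L) :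
    ⁅∑ i ∈ s, f i, z⁆ = ∑ i ∈ s, ⁅f i, z⁆ := by
  classical
  induction s using Finset.induction_on with
  | empty => simp
  | insert _ _ hns ih => rw [Finset.sum_insert hns, Finset.sum_insert hns, add_lie, ih]

omit [Field K] [CharZero K] [LieAlgebra K L] in
lemma lie_sum' {ι : Type*} (s : Finset ι) (f : ι → L) (z : L) :
    ⁅z, ∑ i ∈ s, f i⁆ = ∑ i ∈ s, ⁅z, f i⁆ := by
  classical
  induction s using Finset.induction_on with
  | empty => simp
  | insert _ _ hns ih => rw [Finset.sum_insert hns, Finset.sum_insert hns, lie_add, ih]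

lemma ad_pow_eq_zero_of_le {h : L} {n m : ℕ} (hn : (LieAlgebra.ad K L h) ^ n = 0)
    (hm : n ≤ m) : (LieAlgebra.ad K L h) ^ m = 0 := by
  obtain ⟨k, rfl⟩ := Nat.exists_eq_add_of_le hm
  rw [pow_add, hn, zero_mul]

lemma expAd_stable {h : L} {n m : ℕ} (hn : (LieAlgebra.ad K L h) ^ n = 0)
    (hm : n ≤ m) (z : L) : expAd' K h m z = expAd' K h n z := by
  refine (Finset.sum_subset (Finset.range_subset_range.2 hm) fun i _ hi => ?_).symm
  have : (LieAlgebra.ad K L h) ^ i = 0 :=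
    ad_pow_eq_zero_of_le hn (le_of_not_gt (fun hlt => hi (Finset.mem_range.2 hlt)))
  simp [this]

lemma expAd_lie (h : L) (n : ℕ) (hn : (LieAlgebra.ad K L h) ^ n = 0) (x y : L) :
    expAd' K h n ⁅x, y⁆ = ⁅expAd' K h n x, expAd' K h n y⁆ := by
  rcases Nat.eq_zero_or_pos n with rfl | hn1
  · simp [expAd']
  set A := LieAlgebra.ad K L h with hA
  set g : ℕ × ℕ → L := fun p =>
    (((p.1.factorial : K))⁻¹ * ((p.2.factorial : K))⁻¹) • ⁅(A ^ p.1) x, (A ^ p.2) y⁆ with hg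
  have hzero : ∀ p : ℕ × ℕ, n ≤ p.1 ∨ n ≤ p.2 → g p = 0 := by
    rintro ⟨i, j⟩ (hij | hij) <;>
      · have h0 : A ^ _ = 0 := ad_pow_eq_zero_of_le hn hij
        simp [hg, h0]
  -- the right hand side
  have hrhs : ⁅expAd' K h n x, expAd' K h n y⁆ =
      ∑ p ∈ Finset.range n ×ˢ Finset.range n, g p := by
    rw [Finset.sum_product]
    rw [expAd', expAd', sum_lie']
    refine Finset.sum_congr rfl fun i _ => ?_
    rw [smul_lie, lie_sum', Finset.smul_sum]
    refine Finset.sum_congr rfl fun j _ => ?_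
    rw [lie_smul, hg, smul_smul]
  -- the left hand side over the double antidiagonal
  set F : Finset (ℕ × ℕ) := (Finset.range (2*n)).biUnion (fun m => Finset.HasAntidiagonal.antidiagonal m)
    with hF
  have hdisj : ∀ m₁ ∈ (Finset.range (2*n) : Finset ℕ), ∀ m₂ ∈ (Finset.range (2*n) : Finset ℕ),
      m₁ ≠ m₂ → Disjoint (Finset.HasAntidiagonal.antidiagonal m₁) (Finset.HasAntidiagonal.antidiagonal m₂) := by
    intro m₁ _ m₂ _ hne
    refine Finset.disjoint_left.2 fun p hp1 hp2 => hne ?_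
    rw [Finset.HasAntidiagonal.mem_antidiagonal] at hp1 hp2
    omega
  have hlhs : expAd' K h n ⁅x, y⁆ = ∑ p ∈ F, g p := by
    rw [← expAd_stable hn (by omega : n ≤ 2*n) ⁅x, y⁆]
    rw [hF, Finset.sum_biUnion hdisj, expAd']
    refine Finset.sum_congr rfl fun m _ => ?_
    -- Leibniz rule
    have hDA : ∀ (k : ℕ) (z : L), (⇑(LieDerivation.ad K L h))^[k] z = ((A : Module.End K L) ^ k) z := by
      intro k z
      rw [Module.End.pow_apply]
      have hfun : ⇑(LieDerivation.ad K L h) = ⇑(A : Module.End K L) := by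
        funext w
        rw [hA]
        rw [← LieDerivation.coe_ad_apply_eq_ad_apply (R := K) h]
        rfl
      rw [hfun]
    have hleib := LieDerivation.iterate_apply_lie (LieDerivation.ad K L h) m x y
    have : (A ^ m) ⁅x, y⁆ =
        ∑ p ∈ Finset.HasAntidiagonal.antidiagonal m, m.choose p.1 • ⁅(A ^ p.1) x, (A ^ p.2) y⁆ := by
      rw [← hDA m ⁅x, y⁆, hleib]
      refine Finset.sum_congr rfl fun p _ => ?_
      rw [hDA p.1 x, hDA p.2 y]
    rw [this, Finset.smul_sum]
    refine Finset.sum_congr rfl fun p hp => ?_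
    rw [Finset.HasAntidiagonal.mem_antidiagonal] at hp
    rw [hg]
    rw [← Nat.cast_smul_eq_nsmul K (m.choose p.1), smul_smul]
    congr 1
    -- coefficient identity
    have hfac : (m.choose p.1) * p.1.factorial * p.2.factorial = m.factorial := by
      have := Nat.choose_mul_factorial_mul_factorial (show p.1 ≤ m by omega)
      rwa [show m - p.1 = p.2 by omega] at this
    have hcast : ((m.choose p.1 : K)) * (p.1.factorial : K) * (p.2.factorial : K)
        = (m.factorial : K) := by exact_mod_cast congrArg (Nat.cast (R := K)) hfac
    have h1 : (p.1.factorial : K) ≠ 0 := Nat.cast_ne_zero.2 p.1.factorial_ne_zero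
    have h2 : (p.2.factorial : K) ≠ 0 := Nat.cast_ne_zero.2 p.2.factorial_ne_zero
    have h3 : (m.factorial : K) ≠ 0 := Nat.cast_ne_zero.2 m.factorial_ne_zero
    field_simp
    linear_combination hcast
  -- compare the two index sets
  rw [hlhs, hrhs]
  refine (Finset.sum_subset ?_ ?_).symm
  · rintro ⟨i, j⟩ hp
    rw [Finset.mem_product, Finset.mem_range, Finset.mem_range] at hp
    rw [hF, Finset.mem_biUnion]
    exact ⟨i + j, Finset.mem_range.2 (by omega), Finset.HasAntidiagonal.mem_antidiagonal.2 rfl⟩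
  · rintro ⟨i, j⟩ hpF hp
    rw [Finset.mem_product, Finset.mem_range, Finset.mem_range] at hp
    exact hzero ⟨i, j⟩ (by omega)

end Aux5

lemma iterCent_addSubgroup (K : Type*) {L : Type*} [Field K] [LieRing L]
    [LieAlgebra K L] (A : Set L) (n : ℕ) :
    ∃ T : AddSubgroup L, (T : Set L) = iterCent A n := by
  refine ⟨{ carrier := iterCent A n, zero_mem' := iterCent_zero_mem K A n,
            add_mem' := fun ha hb => iterCent_add_mem K ha hb,
            neg_mem' := fun ha => iterCent_neg_mem K ha }, rfl⟩

lemma expAd_eq_expAd' (K : Type*) {L : Type*} [Field K] [LieRing L]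
    [LieAlgebra K L] (h : L) (n : ℕ) : expAd K h n = expAd' K h n := rfl


/-- Let `S` be a nilpotent subalgebra of class `c` of a Lie algebra `L` of
characteristic zero, and let `H` be a subalgebra of ad-nilpotent elements with
`H ⊆ ⋂_{i ≤ c} N_L(C_L^i(S))`.  Then the subalgebra generated by the images
`S^h`, for `h` in the group generated by exponentials of elements of `H`, is
nilpotent of class at most `c`. -/
theorem conjugates_span_nilpotent {K L : Type*} [Field K] [CharZero K]
    [LieRing L] [LieAlgebra K L] (S H : LieSubalgebra K L) (c : ℕ)
    (hS : lcsSet (S : Set L) c = ⊥)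
    (hHnil : ∀ h ∈ H, ∃ n : ℕ, (LieAlgebra.ad K L h) ^ n = 0)
    (hHnorm : ∀ x ∈ H, ∀ i ≤ c, x ∈ setNormalizer (iterCent (S : Set L) i)) :
    ∀ G : Subgroup (L ≃ₗ[K] L),
      G = Subgroup.closure {f : L ≃ₗ[K] L |
        ∃ h ∈ H, ∃ n : ℕ, (LieAlgebra.ad K L h) ^ n = 0 ∧
          ∀ x, f x = expAd K h n x} →
      lcsSet ((LieSubalgebra.lieSpan K L
        (⋃ f ∈ G, (f : L → L) '' (S : Set L))) : Set L) c = ⊥ := by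
  intro G hG
  set A : Set L := (S : Set L) with hAdef
  have hA : ∀ a ∈ A, ∀ b ∈ A, ⁅a, b⁆ ∈ A := fun a ha b hb => S.lie_mem ha hb
  -- every element of `G` preserves the iterated centralizers and is a Lie
  -- algebra automorphism
  have key : ∀ f ∈ G,
      (∀ j, j ≤ c → ((∀ x, x ∈ iterCent A j → f x ∈ iterCent A j) ∧
        (∀ x, x ∈ iterCent A j → f.symm x ∈ iterCent A j))) ∧
      (∀ x y : L, f ⁅x, y⁆ = ⁅f x, f y⁆) := by
    intro f hf
    rw [hG] at hf
    induction hf using Subgroup.closure_induction with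
    | mem f hfgen =>
      obtain ⟨h, hH, n, hn, hfe⟩ := hfgen
      have hfe' : ∀ x, f x = expAd' K h n x := by
        intro x; rw [hfe, expAd_eq_expAd']
      constructor
      · intro j hj
        obtain ⟨p, hp⟩ := iterCent_submodule K A j
        have hmem : ∀ z : L, z ∈ iterCent A j ↔ z ∈ p := fun z => by
          rw [← hp, SetLike.mem_coe]
        have hpstab : ∀ z ∈ p, ⁅h, z⁆ ∈ p := fun z hz =>
          (hmem _).1 (hHnorm h hH j hj _ ((hmem _).2 hz))

        constructor
        · intro x hx
          rw [hfe']
          exact (hmem _).2 (expAd_mem' h n p hpstab ((hmem x).1 hx))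
        · intro x hx
          exact (hmem _).2 (symm_expAd_mem h n hn f hfe' p hpstab ((hmem x).1 hx))
      · intro x y
        rw [hfe', hfe', hfe', expAd_lie h n hn]
    | one =>
      exact ⟨fun j hj => ⟨fun x hx => hx, fun x hx => hx⟩, fun x y => rfl⟩
    | mul f g hfc hgc ihf ihg =>
      have hmul : ∀ x, (f * g) x = f (g x) := fun x => rfl
      have hmuls : ∀ x, (f * g).symm x = g.symm (f.symm x) := by
        intro x
        apply (f * g).injective
        rw [LinearEquiv.apply_symm_apply, hmul, g.apply_symm_apply, f.apply_symm_apply]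
      refine ⟨fun j hj => ⟨fun x hx => ?_, fun x hx => ?_⟩, fun x y => ?_⟩
      · rw [hmul]
        exact (ihf.1 j hj).1 _ ((ihg.1 j hj).1 x hx)
      · rw [hmuls]
        exact (ihg.1 j hj).2 _ ((ihf.1 j hj).2 x hx)
      · rw [hmul, hmul, hmul, ihg.2, ihf.2]
    | inv f hfc ihf =>
      have hinv : ∀ x, f⁻¹ x = f.symm x := fun x => rfl
      have hinvs : ∀ x, (f⁻¹).symm x = f x := fun x => rfl
      have hsymm_lie : ∀ x y : L, f.symm ⁅x, y⁆ = ⁅f.symm x, f.symm y⁆ := by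
        intro x y
        apply f.injective
        rw [f.apply_symm_apply, ihf.2, f.apply_symm_apply, f.apply_symm_apply]
      refine ⟨fun j hj => ⟨fun x hx => ?_, fun x hx => ?_⟩, fun x y => ?_⟩
      · rw [hinv]; exact (ihf.1 j hj).2 x hx
      · rw [hinvs]; exact (ihf.1 j hj).1 x hx
      · rw [hinv, hinv, hinv]; exact hsymm_lie x y
  -- `S ⊆ C^c`
  have hSC : A ⊆ iterCent A c := by
    intro a ha
    refine lcsSet_subset_iterCent K hA hS c 0 (Nat.zero_add c) ?_
    rw [lcsSet]
    exact AddSubgroup.subset_closure ha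
  set Astar : Set L := ⋃ f ∈ G, (f : L → L) '' A with hAstar
  set N := LieSubalgebra.lieSpan K L Astar with hN
  -- conjugates of S land in C^c
  have hAstarC : Astar ⊆ iterCent A c := by
    rintro x hx
    rw [hAstar, Set.mem_iUnion₂] at hx
    obtain ⟨f, hfG, s, hs, rfl⟩ := hx
    exact ((key f hfG).1 c le_rfl).1 s (hSC hs)
  -- `N ⊆ C^c`
  have hNC : (N : Set L) ⊆ iterCent A c := by
    obtain ⟨pc, hpc⟩ := iterCent_submodule K A c
    have hmemc : ∀ z : L, z ∈ iterCent A c ↔ z ∈ pc := fun z => by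
      rw [← hpc, SetLike.mem_coe]
    set T : LieSubalgebra K L :=
      { carrier := iterCent A c
        zero_mem' := iterCent_zero_mem K A c
        add_mem' := fun ha hb => iterCent_add_mem K ha hb
        smul_mem' := fun k x hx => (iterCent_closed K A c).2.2 k x hx
        lie_mem' := fun ha hb => iterCent_lie_mem K ha hb } with hT
    intro w hw
    exact LieSubalgebra.lieSpan_le.2 (show Astar ⊆ T from hAstarC) hw
  -- key property: brackets with elements of `N` lower the centralizer level
  have hkey : ∀ j, j + 1 ≤ c → ∀ z ∈ iterCent A (j+1), ∀ w ∈ (N : Set L),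
      ⁅z, w⁆ ∈ iterCent A j := by
    intro j hj z hz
    obtain ⟨c', hc'⟩ : ∃ c', c = c' + 1 := ⟨c - 1, by omega⟩
    have hjc' : j ≤ c' := by omega
    set T : LieSubalgebra K L :=
      { carrier := {w : L | w ∈ iterCent A c ∧ ⁅z, w⁆ ∈ iterCent A j}
        zero_mem' := by
          refine ⟨iterCent_zero_mem K A c, ?_⟩
          rw [lie_zero]
          exact iterCent_zero_mem K A j
        add_mem' := by
          rintro x y ⟨hx1, hx2⟩ ⟨hy1, hy2⟩
          refine ⟨iterCent_add_mem K hx1 hy1, ?_⟩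
          rw [lie_add]
          exact iterCent_add_mem K hx2 hy2
        smul_mem' := by
          rintro k x ⟨hx1, hx2⟩
          refine ⟨(iterCent_closed K A c).2.2 k x hx1, ?_⟩
          rw [lie_smul]
          exact (iterCent_closed K A j).2.2 k _ hx2
        lie_mem' := by
          rintro x y ⟨hx1, hx2⟩ ⟨hy1, hy2⟩
          refine ⟨iterCent_lie_mem K hx1 hy1, ?_⟩
          rw [leibniz_lie]
          refine iterCent_add_mem K ?_ ?_
          · have h1 : ⁅y, ⁅z, x⁆⁆ ∈ iterCent A j := by
              rw [hc'] at hy1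
              exact iterCent_succ_norm hy1 hjc' hx2
            have := iterCent_neg_mem K h1
            rwa [lie_skew] at this
          · rw [hc'] at hx1
            exact iterCent_succ_norm hx1 hjc' hy2 } with hT
    have hsub : Astar ⊆ T := by
      rintro x hx
      rw [hAstar, Set.mem_iUnion₂] at hx
      obtain ⟨f, hfG, s, hs, rfl⟩ := hx
      have hkf := key f hfG
      refine ⟨(hkf.1 c le_rfl).1 s (hSC hs), ?_⟩
      have h1 : f.symm z ∈ iterCent A (j+1) := (hkf.1 (j+1) hj).2 z hz
      have h2 : ⁅f.symm z, s⁆ ∈ iterCent A j := (mem_iterCent_succ.1 h1).2 s hs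
      have h3 : f ⁅f.symm z, s⁆ ∈ iterCent A j := (hkf.1 j (by omega)).1 _ h2
      rwa [hkf.2, f.apply_symm_apply] at h3
    intro w hw
    exact (LieSubalgebra.lieSpan_le.2 hsub hw).2
  -- final descent along the lower central series of `N`
  have hfinal : ∀ k, k ≤ c → ((lcsSet (N : Set L) k : Set L)) ⊆ iterCent A (c - k) := by
    intro k
    induction k with
    | zero =>
      intro _
      rw [Nat.sub_zero, lcsSet]
      obtain ⟨T, hT⟩ := iterCent_addSubgroup K A c
      intro x hx
      have hsub : (N : Set L) ⊆ (T : Set L) := by rw [hT]; exact hNC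
      have : x ∈ (T : Set L) := (AddSubgroup.closure_le T).2 hsub hx
      rwa [hT] at this
    | succ k ih =>
      intro hk
      have hck : c - k = (c - (k+1)) + 1 := by omega
      rw [lcsSet, bracketSpan]
      obtain ⟨T, hT⟩ := iterCent_addSubgroup K A (c - (k+1))
      intro x hx
      have hsub : {z : L | ∃ w ∈ (N : Set L), ∃ u ∈ lcsSet (N : Set L) k, z = ⁅w, u⁆} ⊆ (T : Set L) := by
        rintro _ ⟨w, hw, u, hu, rfl⟩
        rw [hT]
        refine ?_
        have hu' : u ∈ iterCent A ((c - (k+1)) + 1) := by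
          rw [← hck]
          exact ih (by omega) hu
        have h1 : ⁅u, w⁆ ∈ iterCent A (c - (k+1)) :=
          hkey (c - (k+1)) (by omega) u hu' w hw
        have := iterCent_neg_mem K h1
        rwa [lie_skew] at this
      have : x ∈ (T : Set L) := (AddSubgroup.closure_le T).2 hsub hx
      rwa [hT] at this
  -- conclude
  rw [AddSubgroup.eq_bot_iff_forall]
  intro x hx
  have := hfinal c le_rfl hx
  rw [Nat.sub_self] at this
  exact mem_iterCent_zero.1 this
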